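/- arXiv:1609.05437 — 3 statements merged into one kernel-verified Lean document; each statement's English description precedes it below -/
import Mathlib

section
/- Let p > 1, let Ω ⊆ ℝ^N be open, let 0 < a ≤ ∞, let u : Ω → ℝ be a C² function with u(Ω) ⊆ (0, a), and let G : (0, a) → ℝ be a C² function with G' > 0 on (0, a). If x ∈ Ω and ∇u(x) ≠ 0, then the flux of G∘u is differentiable at x and Δ_p(G∘u)(x) = (p−1)·G''(u(x))·G'(u(x))^{p−2}·‖∇u(x)‖^p + G'(u(x))^{p−1}·Δ_p u(x). -/
open Real Set Metric MeasureTheory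

/-- The "flux" of `u` at `x`: `‖∇u(x)‖^(p-2) ∇u(x)` (equal to `0` when `∇u(x) = 0`,
by the junk-value conventions of `Real.rpow`, since `p ≠ 2` gives `0 ^ (p-2) = 0` and
for `p = 2` the scalar multiplies the zero vector). -/
noncomputable def flux {N : ℕ} (p : ℝ) (u : EuclideanSpace ℝ (Fin N) → ℝ)
    (x : EuclideanSpace ℝ (Fin N)) : EuclideanSpace ℝ (Fin N) :=
  ‖gradient u x‖ ^ (p - 2) • gradient u x

/-- The divergence of a vector field `V` at `x`: `∑ i, ∂V_i/∂x_i (x)`. -/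
noncomputable def pdiv {N : ℕ} (V : EuclideanSpace ℝ (Fin N) → EuclideanSpace ℝ (Fin N))
    (x : EuclideanSpace ℝ (Fin N)) : ℝ :=
  ∑ i : Fin N, fderiv ℝ V x (EuclideanSpace.single i 1) i

/-!
Since `G' > 0`, the flux of `G ∘ u` is `G'(u)^(p-1) • V_u` on all of `Ω`, by the chain rule for
the gradient and multiplicativity of `t ↦ t^(p-2)`. The product rule for the divergence then gives
`G'(u)^(p-1) Δ_p u` plus the derivative of `G'(u)^(p-1)` in the direction `V_u`, which is
`(p-1) G''(u) G'(u)^(p-2) ⟪∇u, V_u⟫ = (p-1) G''(u) G'(u)^(p-2) ‖∇u‖^p`.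
-/

open Filter Topology

section Gradient

variable {F : Type*} [NormedAddCommGroup F] [InnerProductSpace ℝ F] [CompleteSpace F]
  {u : F → ℝ} {x : F}

theorem HasDerivAt.hasGradientAt_comp {G : ℝ → ℝ} {c : ℝ} (hG : HasDerivAt G c (u x))
    (hu : DifferentiableAt ℝ u x) : HasGradientAt (G ∘ u) (c • gradient u x) x := by
  have h := (hG.comp_hasFDerivAt x hu.hasFDerivAt).hasGradientAt
  rwa [map_smul] at h

theorem ContDiffAt.differentiableAt_gradient (hu : ContDiffAt ℝ 2 u x) :
    DifferentiableAt ℝ (gradient u) x :=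
  (InnerProductSpace.toDual ℝ F).symm.toContinuousLinearEquiv.differentiableAt.comp x
    ((hu.fderiv_right le_rfl).differentiableAt one_ne_zero)

end Gradient

section Flux

variable {N : ℕ} {p : ℝ} {u : EuclideanSpace ℝ (Fin N) → ℝ} {x : EuclideanSpace ℝ (Fin N)}

theorem flux_comp {G : ℝ → ℝ} {c : ℝ} (hu : DifferentiableAt ℝ u x)
    (hG : HasDerivAt G c (u x)) (hc : 0 < c) :
    flux p (G ∘ u) x = c ^ (p - 1) • flux p u x := by
  have hc_pow : c ^ (p - 2) * c = c ^ (p - 1) := by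
    rw [← rpow_add_one hc.ne']
    ring_nf
  rw [flux, flux, (hG.hasGradientAt_comp hu).gradient, norm_smul, norm_of_nonneg hc.le,
    mul_rpow hc.le (norm_nonneg _), smul_smul, smul_smul, mul_right_comm, hc_pow]

theorem ContDiffAt.differentiableAt_flux (hu : ContDiffAt ℝ 2 u x) (hx : gradient u x ≠ 0) :
    DifferentiableAt ℝ (flux p u) x :=
  ((hu.differentiableAt_gradient.norm ℝ hx).rpow_const (Or.inl (norm_ne_zero_iff.mpr hx))).smul
    hu.differentiableAt_gradient

theorem fderiv_apply_flux (hx : gradient u x ≠ 0) :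
    fderiv ℝ u x (flux p u x) = ‖gradient u x‖ ^ p := by
  have hpos : 0 < ‖gradient u x‖ := norm_pos_iff.mpr hx
  rw [← inner_gradient_left, flux, inner_smul_right, real_inner_self_eq_norm_sq,
    ← rpow_two, ← rpow_add hpos]
  ring_nf

theorem Filter.EventuallyEq.pdiv_eq {V W : EuclideanSpace ℝ (Fin N) → EuclideanSpace ℝ (Fin N)}
    (h : V =ᶠ[𝓝 x] W) : pdiv V x = pdiv W x := by
  simp only [pdiv, h.fderiv_eq]

theorem pdiv_smul {φ : EuclideanSpace ℝ (Fin N) → ℝ}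
    {φ' : EuclideanSpace ℝ (Fin N) →L[ℝ] ℝ}
    {V : EuclideanSpace ℝ (Fin N) → EuclideanSpace ℝ (Fin N)}
    (hφ : HasFDerivAt φ φ' x) (hV : DifferentiableAt ℝ V x) :
    pdiv (fun y => φ y • V y) x = φ x * pdiv V x + φ' (V x) := by
  have hexpand : φ' (V x) = ∑ i, φ' (EuclideanSpace.single i 1) * V x i := by
    conv_lhs => rw [← (EuclideanSpace.basisFun (Fin N) ℝ).sum_repr (V x)]
    simp [map_sum, mul_comm]
  rw [hexpand, pdiv, pdiv, Finset.mul_sum, ← Finset.sum_add_distrib,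
    (hφ.fun_smul hV.hasFDerivAt).fderiv]
  simp

end Flux

theorem stmt0_general {N : ℕ} (p : ℝ)
    (Ω : Set (EuclideanSpace ℝ (Fin N))) (hΩ : IsOpen Ω)
    (a : EReal)
    (u : EuclideanSpace ℝ (Fin N) → ℝ) (hu : ContDiffOn ℝ 2 u Ω)
    (hmap : ∀ y ∈ Ω, 0 < u y ∧ (u y : EReal) < a)
    (G : ℝ → ℝ) (hG : ContDiffOn ℝ 2 G {t : ℝ | 0 < t ∧ (t : EReal) < a})
    (hG' : ∀ t : ℝ, 0 < t → (t : EReal) < a → 0 < deriv G t)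
    (x : EuclideanSpace ℝ (Fin N)) (hx : x ∈ Ω) (hgrad : gradient u x ≠ 0) :
    DifferentiableAt ℝ (flux p (G ∘ u)) x ∧
    pdiv (flux p (G ∘ u)) x =
      (p - 1) * deriv (deriv G) (u x) * deriv G (u x) ^ (p - 2) * ‖gradient u x‖ ^ p
        + deriv G (u x) ^ (p - 1) * pdiv (flux p u) x := by
  have hs : IsOpen {t : ℝ | 0 < t ∧ (t : EReal) < a} :=
    (isOpen_lt continuous_const continuous_id).inter
      (isOpen_lt continuous_coe_real_ereal continuous_const)
  have hu_at : ∀ y ∈ Ω, ContDiffAt ℝ 2 u y := fun y hy => hu.contDiffAt (hΩ.mem_nhds hy)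
  have hG_at : ∀ y ∈ Ω, ContDiffAt ℝ 2 G (u y) := fun y hy =>
    hG.contDiffAt (hs.mem_nhds (hmap y hy))
  have hev : flux p (G ∘ u) =ᶠ[𝓝 x] fun y => deriv G (u y) ^ (p - 1) • flux p u y := by
    filter_upwards [hΩ.mem_nhds hx] with y hy
    exact flux_comp ((hu_at y hy).differentiableAt two_ne_zero)
      ((hG_at y hy).differentiableAt two_ne_zero).hasDerivAt (hG' _ (hmap y hy).1 (hmap y hy).2)
  have hG'' : HasDerivAt (deriv G) (deriv (deriv G) (u x)) (u x) :=
    (((hG.deriv_of_isOpen hs le_rfl).contDiffAt (hs.mem_nhds (hmap x hx))).differentiableAt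
      one_ne_zero).hasDerivAt
  have hφ : HasFDerivAt (fun y => deriv G (u y) ^ (p - 1))
      ((deriv (deriv G) (u x) * (p - 1) * deriv G (u x) ^ (p - 1 - 1)) • fderiv ℝ u x) x :=
    (hG''.rpow_const (Or.inl (hG' _ (hmap x hx).1 (hmap x hx).2).ne')).comp_hasFDerivAt x ((hu_at x hx).differentiableAt two_ne_zero).hasFDerivAt
  have hF : DifferentiableAt ℝ (flux p u) x := (hu_at x hx).differentiableAt_flux hgrad
  refine ⟨(hφ.differentiableAt.smul hF).congr_of_eventuallyEq hev, ?_⟩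
  rw [hev.pdiv_eq, pdiv_smul hφ hF, smul_apply, fderiv_apply_flux hgrad, smul_eq_mul,
    show p - 1 - 1 = p - 2 by ring]
  ring

/-- chain-rule formula for the `p`-Laplacian of `G ∘ u` at a point where
`∇u(x) ≠ 0`, for `u` of class `C²` on the open set `Ω` with values in `(0, a)` and
`G` of class `C²` on `(0, a)` with `G' > 0`. -/
theorem stmt0 {N : ℕ} (p : ℝ) (hp : 1 < p)
    (Ω : Set (EuclideanSpace ℝ (Fin N))) (hΩ : IsOpen Ω)
    (a : EReal) (ha : 0 < a)
    (u : EuclideanSpace ℝ (Fin N) → ℝ) (hu : ContDiffOn ℝ 2 u Ω)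
    (hmap : ∀ y ∈ Ω, 0 < u y ∧ (u y : EReal) < a)
    (G : ℝ → ℝ) (hG : ContDiffOn ℝ 2 G {t : ℝ | 0 < t ∧ (t : EReal) < a})
    (hG' : ∀ t : ℝ, 0 < t → (t : EReal) < a → 0 < deriv G t)
    (x : EuclideanSpace ℝ (Fin N)) (hx : x ∈ Ω) (hgrad : gradient u x ≠ 0) :
    DifferentiableAt ℝ (flux p (G ∘ u)) x ∧
    pdiv (flux p (G ∘ u)) x =
      (p - 1) * deriv (deriv G) (u x) * deriv G (u x) ^ (p - 2) * ‖gradient u x‖ ^ p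
        + deriv G (u x) ^ (p - 1) * pdiv (flux p u) x :=
  stmt0_general p Ω hΩ a u hu hmap G hG hG' x hx hgrad
end

section
/- Let p > 1, N ≥ 1, α > 0 and R > 0, and define ψ : ℝ^N → ℝ by ψ(x) = ((p−1)/(α+p))·(α+N)^{−1/(p−1)}·(R^{(α+p)/(p−1)} − ‖x‖^{(α+p)/(p−1)}). Then ψ is differentiable, for every x ∈ ℝ^N the flux of ψ at x equals −‖x‖^α x/(α+N), this flux vector field is differentiable with divergence −‖x‖^α (so −Δ_p ψ(x) = ‖x‖^α for all x), and ψ(x) = 0 whenever ‖x‖ = R. -/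
/-!
The gradient of `x ↦ c (A - ‖x‖^β)` is `-c β ‖x‖^(β-2) x`, so its flux is
`-(c β)^(p-1) ‖x‖^((β-1)(p-1)-1) x`. With `β = (α+p)/(p-1)` the exponent is `α`, and the
constant `c` is chosen so that `(c β)^(p-1) = 1/(α+N)`. The field `‖x‖^α x` has Jacobian
`‖x‖^α I + α ‖x‖^(α-2) x xᵀ`, whose trace is `(N + α) ‖x‖^α`; at the origin it is
differentiable with derivative `0` because `α > 0`.
-/

open Real Set Metric MeasureTheory

open Asymptotics Topology

section InnerProductSpace

variable {E : Type*} [NormedAddCommGroup E] [InnerProductSpace ℝ E]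

theorem hasFDerivAt_norm_rpow_of_ne_zero (r : ℝ) {x : E} (hx : x ≠ 0) :
    HasFDerivAt (fun y : E ↦ ‖y‖ ^ r) ((r * ‖x‖ ^ (r - 2)) • innerSL ℝ x) x := by
  apply HasStrictFDerivAt.hasFDerivAt
  convert! (hasStrictFDerivAt_norm_sq x).rpow_const (p := r / 2) (by simp [hx]) using 0
  simp_rw [← Real.rpow_natCast_mul (norm_nonneg _), ← Nat.cast_smul_eq_nsmul ℝ, smul_smul]
  ring_nf

theorem hasFDerivAt_norm_rpow_smul_self_zero {α : ℝ} (hα : 0 < α) :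
    HasFDerivAt (fun y : E ↦ ‖y‖ ^ α • y) (0 : E →L[ℝ] E) 0 := by
  refine .of_isLittleO ?_
  have hsmall : (fun y : E ↦ ‖y‖ ^ α) =o[𝓝 0] (fun _ ↦ (1 : ℝ)) := by
    refine (isLittleO_const_iff one_ne_zero).mpr ?_
    convert! continuousAt_id.norm.rpow_const (.inr hα.le) |>.tendsto
    simp [hα.ne']
  simpa using hsmall.smul_isBigO (isBigO_refl (fun y : E ↦ y) _)

theorem hasFDerivAt_norm_rpow_smul_self {α : ℝ} (hα : 0 < α) (x : E) :
    HasFDerivAt (fun y : E ↦ ‖y‖ ^ α • y)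
      (‖x‖ ^ α • ContinuousLinearMap.id ℝ E
        + ((α * ‖x‖ ^ (α - 2)) • innerSL ℝ x).smulRight x) x := by
  rcases eq_or_ne x 0 with rfl | hx
  · simpa [zero_rpow hα.ne'] using hasFDerivAt_norm_rpow_smul_self_zero (E := E) hα
  · exact (hasFDerivAt_norm_rpow_of_ne_zero α hx).smul (hasFDerivAt_id x)

variable [CompleteSpace E]

theorem hasGradientAt_mul_sub_norm_rpow (c A : ℝ) {β : ℝ} (hβ : 1 < β) (x : E) :
    HasGradientAt (fun y : E ↦ c * (A - ‖y‖ ^ β)) ((-(c * β * ‖x‖ ^ (β - 2))) • x) x := by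
  rw [hasGradientAt_iff_hasFDerivAt]
  refine (((hasFDerivAt_norm_rpow x hβ).const_sub A).const_mul c).congr_fderiv ?_
  ext v
  simp only [smul_neg, neg_apply, smul_apply, coe_innerSL_apply, smul_eq_mul, neg_smul, map_neg,
    map_smul, InnerProductSpace.toDual_apply_apply, neg_inj]
  ring

end InnerProductSpace

section EuclideanSpace

variable {N : ℕ}

local notation "ℝ^N" => EuclideanSpace ℝ (Fin N)

theorem flux_mul_sub_norm_rpow {c β : ℝ} (hc : 0 < c) (hβ : 1 < β) (p A : ℝ) (x : ℝ^N) :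
    flux p (fun y : ℝ^N ↦ c * (A - ‖y‖ ^ β)) x
      = (-((c * β) ^ (p - 1) * ‖x‖ ^ ((β - 1) * (p - 1) - 1))) • x := by
  rw [flux, (hasGradientAt_mul_sub_norm_rpow c A hβ x).gradient]
  rcases eq_or_ne x 0 with rfl | hx
  · simp
  have hx' : 0 < ‖x‖ := norm_pos_iff.mpr hx
  have hcβ : 0 < c * β := by positivity
  have hnorm : ‖(-(c * β * ‖x‖ ^ (β - 2))) • x‖ = c * β * ‖x‖ ^ (β - 1) := by
    rw [norm_smul, norm_neg, Real.norm_of_nonneg (by positivity), mul_assoc,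
      ← rpow_add_one hx'.ne']
    ring_nf
  rw [hnorm, smul_smul, mul_rpow hcβ.le (by positivity), ← rpow_mul hx'.le]
  congr 1
  have hexp : (β - 1) * (p - 1) - 1 = (β - 1) * (p - 2) + (β - 2) := by ring
  rw [hexp, rpow_add hx', show p - 1 = p - 2 + 1 by ring, rpow_add_one hcβ.ne']
  ring

theorem sum_smul_id_add_smulRight_single (c : ℝ) (u v : ℝ^N) :
    ∑ i, (c • ContinuousLinearMap.id ℝ ℝ^N + (innerSL ℝ u).smulRight v)
      (EuclideanSpace.single i 1) i = N * c + inner ℝ u v := by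
  simp [Finset.sum_add_distrib, PiLp.inner_apply, mul_comm]

theorem pdiv_const_smul_norm_rpow_smul_self (a : ℝ) {α : ℝ} (hα : 0 < α) (x : ℝ^N) :
    pdiv (fun y : ℝ^N ↦ a • (‖y‖ ^ α • y)) x = a * ((α + N) * ‖x‖ ^ α) := by
  have hV : HasFDerivAt (fun y : ℝ^N ↦ a • (‖y‖ ^ α • y)) _ x :=
    (hasFDerivAt_norm_rpow_smul_self hα x).const_smul a
  rw [pdiv, hV.fderiv]
  have hpow : ‖x‖ ^ (α - 2) * ‖x‖ ^ 2 = ‖x‖ ^ α := by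
    rw [← rpow_natCast, ← rpow_add' (norm_nonneg x)] <;> norm_num [hα.ne']
  simp only [smul_apply, PiLp.smul_apply, smul_eq_mul, ← Finset.mul_sum]
  rw [← map_smul, sum_smul_id_add_smulRight_single, real_inner_smul_left,
    real_inner_self_eq_norm_sq]
  linear_combination a * α * hpow

end EuclideanSpace

theorem stmt5_general {N : ℕ} (p : ℝ) (hp : 1 < p)
    (α : ℝ) (hα : 0 < α) (R : ℝ)
    (ψ : EuclideanSpace ℝ (Fin N) → ℝ)
    (hψ : ψ = fun x => ((p - 1) / (α + p)) * (α + (N : ℝ)) ^ (-(1 / (p - 1))) *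
      (R ^ ((α + p) / (p - 1)) - ‖x‖ ^ ((α + p) / (p - 1)))) :
    Differentiable ℝ ψ ∧
    (∀ x, flux p ψ x = (-(‖x‖ ^ α / (α + (N : ℝ)))) • x) ∧
    Differentiable ℝ (flux p ψ) ∧
    (∀ x, pdiv (flux p ψ) x = -‖x‖ ^ α) ∧
    (∀ x, ‖x‖ = R → ψ x = 0) := by
  have hp1 : 0 < p - 1 := by linarith
  have hαN : 0 < α + N := by positivity
  set β := (α + p) / (p - 1) with hβ_def
  set c := (p - 1) / (α + p) * (α + N) ^ (-(1 / (p - 1))) with hc_def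
  have hβ : 1 < β := by rw [lt_div_iff₀ hp1]; linarith
  have hc : 0 < c := by positivity
  have hcβ : (c * β) ^ (p - 1) = (α + N)⁻¹ := by
    rw [hc_def, hβ_def, show (p - 1) / (α + p) * (α + N) ^ (-(1 / (p - 1))) * ((α + p) / (p - 1))
      = (α + N) ^ (-(1 / (p - 1))) by field_simp, ← rpow_mul hαN.le,
      show -(1 / (p - 1)) * (p - 1) = -1 by field_simp, rpow_neg_one]
  have hexp : (β - 1) * (p - 1) - 1 = α := by rw [hβ_def]; field_simp; ring
  have hflux : flux p ψ = fun x ↦ (-(α + N)⁻¹) • (‖x‖ ^ α • x) := by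
    funext x
    rw [hψ, flux_mul_sub_norm_rpow hc hβ, hcβ, hexp, smul_smul, neg_mul]
  refine ⟨?_, ?_, ?_, ?_, ?_⟩
  · exact fun x ↦ (hψ ▸ hasGradientAt_mul_sub_norm_rpow c _ hβ x).differentiableAt
  · intro x
    simp only [hflux, smul_smul]
    congr 1
    ring
  · rw [hflux]
    exact fun x ↦
      ((hasFDerivAt_norm_rpow_smul_self hα x).const_smul (-(α + N)⁻¹ : ℝ)).differentiableAt
  · intro x
    rw [hflux, pdiv_const_smul_norm_rpow_smul_self _ hα]
    field_simp
  · intro x hx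
    simp [hψ, hx]

/-- the function
`ψ(x) = ((p-1)/(α+p)) (α+N)^(-1/(p-1)) (R^((α+p)/(p-1)) - ‖x‖^((α+p)/(p-1)))`
is differentiable, its flux is `-‖x‖^α x/(α+N)`, this flux field is differentiable
with divergence `-‖x‖^α` (so `-Δ_p ψ(x) = ‖x‖^α`), and `ψ` vanishes on `‖x‖ = R`. -/
theorem stmt5 {N : ℕ} (hN : 1 ≤ N) (p : ℝ) (hp : 1 < p)
    (α : ℝ) (hα : 0 < α) (R : ℝ) (hR : 0 < R)
    (ψ : EuclideanSpace ℝ (Fin N) → ℝ)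
    (hψ : ψ = fun x => ((p - 1) / (α + p)) * (α + (N : ℝ)) ^ (-(1 / (p - 1))) *
      (R ^ ((α + p) / (p - 1)) - ‖x‖ ^ ((α + p) / (p - 1)))) :
    Differentiable ℝ ψ ∧
    (∀ x, flux p ψ x = (-(‖x‖ ^ α / (α + (N : ℝ)))) • x) ∧
    Differentiable ℝ (flux p ψ) ∧
    (∀ x, pdiv (flux p ψ) x = -‖x‖ ^ α) ∧
    (∀ x, ‖x‖ = R → ψ x = 0) :=
  stmt5_general p hp α hα R ψ hψ
end

section
/- Let p > 1, let Ω ⊆ ℝ^N be open, and let ψ : Ω → ℝ be C¹ with 0 ≤ ψ(x) ≤ ψ_M := sup_Ω ψ < ∞, whose flux V_ψ is continuously differentiable on Ω with div V_ψ(x) = −1 for all x ∈ Ω. Let f satisfy condition (C), let α > 0 with α·ψ_M < a_f, and let λ > 0 satisfy λ·f(α·ψ_M) ≤ α^{p−1}. Then the flux of ū := α·ψ satisfies V_{ū} = α^{p−1}·V_ψ, is continuously differentiable, and div V_{ū}(x) + λ·f(ū(x)) ≤ 0 for all x ∈ Ω (i.e. ū is a classical supersolution of −Δ_p u = λ f(u)).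 -/
/-! The flux is positively homogeneous of degree `p - 1`, so `V_{αψ} = α^(p-1) V_ψ` and
`Δ_p (αψ) = -α^(p-1)`. Since `f` is nondecreasing and `αψ ≤ αψ_M`,
`λ f(αψ) ≤ λ f(αψ_M) ≤ α^(p-1)`. -/

open Real Set Metric MeasureTheory

-- No differentiability is needed: `fderiv ℝ (c • u) = c • fderiv ℝ u` for every `u`.
theorem gradient_const_mul {F : Type*} [NormedAddCommGroup F] [InnerProductSpace ℝ F]
    [CompleteSpace F] (c : ℝ) (u : F → ℝ) (x : F) :
    gradient (fun y => c * u y) x = c • gradient u x := by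
  change (InnerProductSpace.toDual ℝ F).symm (fderiv ℝ (c • u) x) = _
  rw [fderiv_const_smul_field, Pi.smul_apply, map_smul]
  rfl

theorem flux_const_mul {N : ℕ} (p : ℝ) {α : ℝ} (hα : 0 < α)
    (u : EuclideanSpace ℝ (Fin N) → ℝ) :
    flux p (fun y => α * u y) = α ^ (p - 1) • flux p u := by
  ext1 x
  have hpow : α ^ (p - 2) * α = α ^ (p - 1) := by
    rw [← rpow_add_one hα.ne']
    ring_nf
  rw [Pi.smul_apply, flux, flux, gradient_const_mul, norm_smul, norm_of_nonneg hα.le,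
    mul_rpow hα.le (norm_nonneg _), smul_smul, smul_smul, ← hpow]
  ring_nf

theorem pdiv_const_smul {N : ℕ} (c : ℝ)
    (V : EuclideanSpace ℝ (Fin N) → EuclideanSpace ℝ (Fin N)) (x : EuclideanSpace ℝ (Fin N)) :
    pdiv (c • V) x = c * pdiv V x := by
  simp only [pdiv, fderiv_const_smul_field, Pi.smul_apply, FunLike.coe_smul,
    PiLp.smul_apply, smul_eq_mul, Finset.mul_sum]

theorem stmt10_general {N : ℕ} (p : ℝ)
    (Ω : Set (EuclideanSpace ℝ (Fin N)))
    (ψ : EuclideanSpace ℝ (Fin N) → ℝ)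
    (hψ0 : ∀ x ∈ Ω, 0 ≤ ψ x) (hψbdd : BddAbove (ψ '' Ω))
    (hψflux : ContDiffOn ℝ 1 (flux p ψ) Ω)
    (hψeq : ∀ x ∈ Ω, pdiv (flux p ψ) x = -1)
    (af : EReal) (f : ℝ → ℝ)
    (hmono : MonotoneOn f {t : ℝ | 0 ≤ t ∧ (t : EReal) < af})
    (α : ℝ) (hα : 0 < α)
    (hdom : ((α * sSup (ψ '' Ω) : ℝ) : EReal) < af)
    (lam : ℝ) (hlam : 0 < lam)
    (hle : lam * f (α * sSup (ψ '' Ω)) ≤ α ^ (p - 1)) :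
    (∀ x ∈ Ω, flux p (fun y => α * ψ y) x = α ^ (p - 1) • flux p ψ x) ∧
    ContDiffOn ℝ 1 (flux p (fun y => α * ψ y)) Ω ∧
    ∀ x ∈ Ω, pdiv (flux p (fun y => α * ψ y)) x + lam * f (α * ψ x) ≤ 0 := by
  have hflux := flux_const_mul p hα ψ
  refine ⟨fun x _ => congrFun hflux x, hflux ▸ hψflux.const_smul (α ^ (p - 1)), fun x hx => ?_⟩
  have hαψ : α * ψ x ≤ α * sSup (ψ '' Ω) :=
    mul_le_mul_of_nonneg_left (le_csSup hψbdd (mem_image_of_mem ψ hx)) hα.le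
  have hαψ0 : 0 ≤ α * ψ x := mul_nonneg hα.le (hψ0 x hx)
  have hf : f (α * ψ x) ≤ f (α * sSup (ψ '' Ω)) :=
    hmono ⟨hαψ0, (EReal.coe_le_coe_iff.2 hαψ).trans_lt hdom⟩ ⟨hαψ0.trans hαψ, hdom⟩ hαψ
  rw [hflux, pdiv_const_smul, hψeq x hx]
  linarith [mul_le_mul_of_nonneg_left hf hlam.le]

/-- if `ψ ≥ 0` is `C¹` on the open set `Ω` with `ψ_M := sup_Ω ψ < ∞`,
`-Δ_p ψ = 1` on `Ω`, `f` satisfies (C), `α > 0` with `α ψ_M < a_f`, and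
`λ f(α ψ_M) ≤ α^(p-1)`, then `ū = α ψ` has flux `α^(p-1) V_ψ`, its flux is continuously
differentiable, and `Δ_p ū + λ f(ū) ≤ 0` on `Ω` (a classical supersolution). -/
theorem stmt10 {N : ℕ} (p : ℝ) (hp : 1 < p)
    (Ω : Set (EuclideanSpace ℝ (Fin N))) (hΩo : IsOpen Ω)
    (ψ : EuclideanSpace ℝ (Fin N) → ℝ)
    (hψ1 : ContDiffOn ℝ 1 ψ Ω)
    (hψ0 : ∀ x ∈ Ω, 0 ≤ ψ x) (hψbdd : BddAbove (ψ '' Ω))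
    (hψflux : ContDiffOn ℝ 1 (flux p ψ) Ω)
    (hψeq : ∀ x ∈ Ω, pdiv (flux p ψ) x = -1)
    (af : EReal) (haf : 0 < af) (f : ℝ → ℝ)
    (hf0 : ∀ t : ℝ, 0 ≤ t → (t : EReal) < af → 0 ≤ f t)
    (hfpos : ∀ t : ℝ, 0 < t → (t : EReal) < af → 0 < f t)
    (hmono : MonotoneOn f {t : ℝ | 0 ≤ t ∧ (t : EReal) < af})
    (hreg : ContDiffOn ℝ 1 f {t : ℝ | 0 ≤ t ∧ (t : EReal) < af})
    (α : ℝ) (hα : 0 < α)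
    (hdom : ((α * sSup (ψ '' Ω) : ℝ) : EReal) < af)
    (lam : ℝ) (hlam : 0 < lam)
    (hle : lam * f (α * sSup (ψ '' Ω)) ≤ α ^ (p - 1)) :
    (∀ x ∈ Ω, flux p (fun y => α * ψ y) x = α ^ (p - 1) • flux p ψ x) ∧
    ContDiffOn ℝ 1 (flux p (fun y => α * ψ y)) Ω ∧
    ∀ x ∈ Ω, pdiv (flux p (fun y => α * ψ y)) x + lam * f (α * ψ x) ≤ 0 :=
  stmt10_general p Ω ψ hψ0 hψbdd hψflux hψeq af f hmono α hα hdom lam hlam hle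
end
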